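/- Let μ satisfy GCB(C) and be translation invariant, μ' translation invariant. Let f be a bounded local function with dependence set in the cube Λ_r, ∫ f dμ' - ∫ f dμ > u > 0, and ‖δf‖_1² = ρ ∈ (0,∞). Then for all n, s_{Λ_{n+r}}(μ'|μ)/|Λ_n| ≥ sup_{β ≥ 0} (βu - (C/2)β²ρ) = u²/(2Cρ) > 0. -/

import Mathlib

open MeasureTheory ENNReal Filter Topology

/-- Configuration space Ω = S^(ℤ^d). -/
abbrev Config (S : Type*) (d : ℕ) := (Fin d → ℤ) → S

/-- Single-site oscillation δ_i f, valued in [0,∞]. -/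
noncomputable def osc {S : Type*} {d : ℕ} (f : Config S d → ℝ) (i : Fin d → ℤ) : ℝ≥0∞ :=
  ⨆ (σ : Config S d) (η : Config S d) (_ : ∀ j, j ≠ i → σ j = η j),
    ENNReal.ofReal (f σ - f η)

/-- Translation of a configuration: (τ_i σ)_j = σ_{j-i}. -/
def shift {S : Type*} {d : ℕ} (i : Fin d → ℤ) (σ : Config S d) : Config S d :=
  fun j => σ (j - i)

/-- f is bounded. -/
def IsBoundedFn {S : Type*} {d : ℕ} (f : Config S d → ℝ) : Prop :=
  ∃ M : ℝ, ∀ σ, |f σ| ≤ M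

/-- f is local: it depends only on the coordinates in some finite set Λ. -/
def IsLocalFn {S : Type*} {d : ℕ} (f : Config S d → ℝ) : Prop :=
  ∃ Λ : Finset (Fin d → ℤ), ∀ σ η : Config S d, (∀ i ∈ Λ, σ i = η i) → f σ = f η

/-- The configuration equal to η on Λ and to ξ off Λ. -/
def patch {S : Type*} {d : ℕ} (Λ : Finset (Fin d → ℤ)) (η ξ : Config S d) : Config S d :=
  fun j => if j ∈ Λ then η j else ξ j

/-- Gaussian concentration bound GCB(C) for all bounded local measurable functions. -/
def GCB {S : Type*} {d : ℕ} [MeasurableSpace S] (C : ℝ)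
    (μ : Measure (Config S d)) : Prop :=
  ∀ f : Config S d → ℝ, Measurable f → IsBoundedFn f → IsLocalFn f →
    ∫ x, Real.exp (f x - ∫ y, f y ∂μ) ∂μ ≤
      Real.exp (C / 2 * (∑' i, (osc f i) ^ 2).toReal)

/-- Translation invariance of a measure. -/
def TransInv {S : Type*} {d : ℕ} [MeasurableSpace S] (μ : Measure (Config S d)) : Prop :=
  ∀ i : Fin d → ℤ, μ.map (shift i) = μ

open Classical in
/-- Relative entropy of μ' w.r.t. μ. -/
noncomputable def relEnt {α : Type*} [MeasurableSpace α] (μ' μ : Measure α) : ℝ≥0∞ :=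
  if μ' ≪ μ ∧ Integrable (llr μ' μ) μ' then ENNReal.ofReal (∫ x, llr μ' μ x ∂μ') else ⊤

/-- The cube Λ_n = [-n,n]^d ∩ ℤ^d. -/
noncomputable def cube (d n : ℕ) : Finset (Fin d → ℤ) :=
  Fintype.piFinset fun _ : Fin d => Finset.Icc (-(n : ℤ)) (n : ℤ)

/-- Projection onto the coordinates in Λ. -/
def proj {S : Type*} {d : ℕ} (Λ : Finset (Fin d → ℤ)) (σ : Config S d) : Λ → S :=
  fun i => σ i

/-- Relative entropy of the marginals on Λ. -/
noncomputable def relEntΛ {S : Type*} {d : ℕ} [MeasurableSpace S]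
    (Λ : Finset (Fin d → ℤ)) (μ' μ : Measure (Config S d)) : ℝ≥0∞ :=
  relEnt (μ'.map (proj Λ)) (μ.map (proj Λ))

/-- Lower relative entropy density s_*(μ'|μ). -/
noncomputable def entDensity {S : Type*} {d : ℕ} [MeasurableSpace S]
    (μ' μ : Measure (Config S d)) : ℝ≥0∞ :=
  Filter.atTop.liminf fun n : ℕ => relEntΛ (cube d n) μ' μ / (cube d n).card

/-!
For `β ≥ 0`, apply the Donsker–Varadhan bound `s(μ'|μ) ≥ μ'(F) - log μ(e^F)` on the marginals
on `Λ_{n+r}` to `F = β ∑_{k ∈ Λ_n} τ_k f`, which depends only on the coordinates in `Λ_{n+r}`.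
By translation invariance `μ'(F) - μ(F) = β |Λ_n| (μ'(f) - μ(f)) ≥ β |Λ_n| u`, while GCB gives
`log μ(e^F) ≤ μ(F) + (C/2) β² ‖δ(∑ τ_k f)‖₂²` and Young's inequality bounds the last norm by
`|Λ_n| ‖δf‖₁²`. Hence `s_{Λ_{n+r}}(μ'|μ) ≥ |Λ_n| (β u - (C/2) β² ρ)`; take `β = u / (C ρ)`.
-/

open Function Real

section RelativeEntropy

variable {α : Type*} [MeasurableSpace α]

lemma integrable_exp_of_abs_le {μ : Measure α} [IsFiniteMeasure μ] {g : α → ℝ}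
    (hg : Measurable g) {M : ℝ} (hM : ∀ x, |g x| ≤ M) : Integrable (fun x => exp (g x)) μ :=
  .of_bound hg.exp.aestronglyMeasurable (exp M) (.of_forall fun x => by
    rw [norm_eq_abs, abs_exp]
    exact exp_le_exp.mpr ((le_abs_self _).trans (hM x)))

theorem integral_sub_log_integral_exp_le_integral_llr {μ ν : Measure α}
    [IsProbabilityMeasure μ] [IsProbabilityMeasure ν] (hμν : μ ≪ ν)
    (hllr : Integrable (llr μ ν) μ) {g : α → ℝ} (hgμ : Integrable g μ)
    (hgν : Integrable (fun x => exp (g x)) ν) :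
    ∫ x, g x ∂μ - log (∫ x, exp (g x) ∂ν) ≤ ∫ x, llr μ ν x ∂μ := by
  -- Gibbs' inequality for `μ` against the tilted measure `ν.tilted g`.
  have := isProbabilityMeasure_tilted hgν
  have hgibbs := InformationTheory.integral_llr_add_sub_measure_univ_nonneg
    (hμν.trans (absolutelyContinuous_tilted hgν)) (integrable_llr_tilted_right hμν hgμ hllr hgν)
  rw [integral_llr_tilted_right hμν hgμ hgν hllr] at hgibbs
  simp only [probReal_univ, add_sub_cancel_right] at hgibbs
  linarith

theorem ofReal_integral_sub_log_integral_exp_le_relEnt (μ ν : Measure α)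
    [IsProbabilityMeasure μ] [IsProbabilityMeasure ν] {g : α → ℝ} (hgμ : Integrable g μ)
    (hgν : Integrable (fun x => exp (g x)) ν) :
    ENNReal.ofReal (∫ x, g x ∂μ - log (∫ x, exp (g x) ∂ν)) ≤ relEnt μ ν := by
  unfold relEnt
  split_ifs with h
  · exact ENNReal.ofReal_le_ofReal
      (integral_sub_log_integral_exp_le_integral_llr h.1 h.2 hgμ hgν)
  · exact le_top

end RelativeEntropy

section Configurations

variable {S : Type*} {d : ℕ}

lemma zero_mem_cube (n : ℕ) : (0 : Fin d → ℤ) ∈ cube d n := by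
  simp [cube, Fintype.mem_piFinset]

lemma sub_mem_cube_add {n r : ℕ} {k m : Fin d → ℤ} (hk : k ∈ cube d n) (hm : m ∈ cube d r) :
    m - k ∈ cube d (n + r) := by
  simp only [cube, Fintype.mem_piFinset, Finset.mem_Icc] at hk hm ⊢
  intro j
  have := hk j
  have := hm j
  simp only [Pi.sub_apply, Nat.cast_add]
  omega

lemma IsBoundedFn.integrable [MeasurableSpace S] {f : Config S d → ℝ} (hf : IsBoundedFn f)
    (hm : Measurable f) (μ : Measure (Config S d)) [IsFiniteMeasure μ] : Integrable f μ := by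
  obtain ⟨M, hM⟩ := hf
  exact .of_bound hm.aestronglyMeasurable M (.of_forall hM)

lemma IsBoundedFn.const_mul {f : Config S d → ℝ} (hf : IsBoundedFn f) (β : ℝ) :
    IsBoundedFn fun σ => β * f σ := by
  obtain ⟨M, hM⟩ := hf
  exact ⟨|β| * M, fun σ => by
    rw [abs_mul]; exact mul_le_mul_of_nonneg_left (hM σ) (abs_nonneg β)⟩

variable [MeasurableSpace S]

lemma measurable_shift (i : Fin d → ℤ) : Measurable (shift (S := S) i) :=
  measurable_pi_lambda _ fun j => measurable_pi_apply (j - i)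

lemma TransInv.integral_comp_shift {μ : Measure (Config S d)} (hμ : TransInv μ)
    {f : Config S d → ℝ} (hf : Measurable f) (i : Fin d → ℤ) :
    ∫ σ, f (shift i σ) ∂μ = ∫ σ, f σ ∂μ := by
  conv_rhs => rw [← hμ i]
  rw [integral_map (measurable_shift i).aemeasurable hf.aestronglyMeasurable]

theorem ofReal_integral_sub_log_integral_exp_le_relEntΛ (μ' μ : Measure (Config S d))
    [IsProbabilityMeasure μ'] [IsProbabilityMeasure μ] {Λ : Finset (Fin d → ℤ)}
    {F : Config S d → ℝ} (hm : Measurable F) (hb : IsBoundedFn F) (hdep : DependsOn F Λ) :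
    ENNReal.ofReal (∫ σ, F σ ∂μ' - log (∫ σ, exp (F σ) ∂μ)) ≤ relEntΛ Λ μ' μ := by
  classical
  obtain ⟨ξ⟩ := nonempty_of_isProbabilityMeasure μ
  obtain ⟨M, hM⟩ := hb
  set G : (Λ → S) → ℝ := fun x => F (updateFinset ξ Λ x)
  have hGm : Measurable G := hm.comp measurable_updateFinset
  have hGF : ∀ σ, G (proj Λ σ) = F σ := fun σ =>
    hdep fun i hi => by simp [updateFinset, proj, Finset.mem_coe.mp hi]
  have hproj : Measurable (proj (S := S) Λ) := Finset.measurable_restrict Λ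
  have := Measure.isProbabilityMeasure_map (μ := μ') hproj.aemeasurable
  have := Measure.isProbabilityMeasure_map (μ := μ) hproj.aemeasurable
  have hGM : ∀ x, |G x| ≤ M := fun x => hM _
  have key := ofReal_integral_sub_log_integral_exp_le_relEnt (μ'.map (proj Λ)) (μ.map (proj Λ))
    (Integrable.of_bound hGm.aestronglyMeasurable M (.of_forall hGM))
    (integrable_exp_of_abs_le hGm hGM)
  rwa [integral_map hproj.aemeasurable hGm.aestronglyMeasurable,
    integral_map hproj.aemeasurable hGm.exp.aestronglyMeasurable, funext hGF,
    funext fun σ => congrArg exp (hGF σ)] at key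

end Configurations

section Oscillation

variable {S : Type*} {d : ℕ}

lemma osc_const_mul {F : Config S d → ℝ} {β : ℝ} (hβ : 0 ≤ β) (i : Fin d → ℤ) :
    osc (fun σ => β * F σ) i = ENNReal.ofReal β * osc F i := by
  simp only [osc, ENNReal.mul_iSup, ← mul_sub, ENNReal.ofReal_mul hβ]

lemma osc_sum_le {ι : Type*} (s : Finset ι) (g : ι → Config S d → ℝ) (i : Fin d → ℤ) :
    osc (fun σ => ∑ k ∈ s, g k σ) i ≤ ∑ k ∈ s, osc (g k) i := by
  refine iSup₂_le fun σ η => iSup_le fun hση => ?_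
  rw [← Finset.sum_sub_distrib]
  refine (Finset.le_sum_of_subadditive ENNReal.ofReal ENNReal.ofReal_zero.le
    (fun _ _ => ENNReal.ofReal_add_le) s _).trans (Finset.sum_le_sum fun k _ => ?_)
  exact le_iSup₂_of_le σ η (le_iSup_of_le hση le_rfl)

lemma osc_comp_shift_le (f : Config S d → ℝ) (k i : Fin d → ℤ) :
    osc (fun σ => f (shift k σ)) i ≤ osc f (i + k) := by
  refine iSup₂_le fun σ η => iSup_le fun hση => ?_
  refine le_iSup₂_of_le (shift k σ) (shift k η) (le_iSup_of_le (fun j hj => ?_) le_rfl)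
  exact hση _ fun h => hj (by rw [← h, sub_add_cancel])

lemma toReal_tsum_osc_const_mul_sq (F : Config S d → ℝ) {β : ℝ} (hβ : 0 ≤ β) :
    (∑' i, osc (fun σ => β * F σ) i ^ 2).toReal = β ^ 2 * (∑' i, osc F i ^ 2).toReal := by
  simp_rw [osc_const_mul hβ, mul_pow, ENNReal.tsum_mul_left, ENNReal.toReal_mul,
    ENNReal.toReal_pow, ENNReal.toReal_ofReal hβ]

-- Young's inequality: `‖·‖₂² ≤ ‖·‖_∞ ‖·‖₁`, and both norms of `i ↦ ∑ k ∈ Λ, a (i + k)` are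
-- controlled by `‖a‖₁`.
lemma tsum_sum_add_sq_le {G : Type*} [AddGroup G] (a : G → ℝ≥0∞) (Λ : Finset G) :
    ∑' i, (∑ k ∈ Λ, a (i + k)) ^ 2 ≤ Λ.card * (∑' m, a m) ^ 2 := by
  set A := ∑' m, a m
  have hpointwise : ∀ i, ∑ k ∈ Λ, a (i + k) ≤ A := fun i =>
    (Finset.sum_map Λ (addLeftEmbedding i) a).symm.trans_le (ENNReal.sum_le_tsum _)
  have htranslate : ∀ k, ∑' i, a (i + k) = A := fun k => (Equiv.addRight k).tsum_eq a
  have hsum : ∑' i, ∑ k ∈ Λ, a (i + k) = Λ.card * A := by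
    rw [Summable.tsum_finsetSum fun k _ => ENNReal.summable]
    simp [htranslate]
  calc ∑' i, (∑ k ∈ Λ, a (i + k)) ^ 2
      ≤ ∑' i, A * ∑ k ∈ Λ, a (i + k) :=
        ENNReal.tsum_le_tsum fun i => by rw [sq]; exact mul_le_mul_left (hpointwise i) _
    _ = Λ.card * A ^ 2 := by rw [ENNReal.tsum_mul_left, hsum]; ring

end Oscillation

section Concentration

variable {S : Type*} {d : ℕ} [MeasurableSpace S]

lemma GCB.log_integral_exp_le {C : ℝ} {μ : Measure (Config S d)} [IsProbabilityMeasure μ]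
    (hμ : GCB C μ) {F : Config S d → ℝ} (hm : Measurable F) (hb : IsBoundedFn F)
    (hloc : IsLocalFn F) :
    log (∫ σ, exp (F σ) ∂μ) ≤ ∫ σ, F σ ∂μ + C / 2 * (∑' i, osc F i ^ 2).toReal := by
  set c := ∫ σ, F σ ∂μ
  have hcentered : Integrable (fun σ => exp (F σ - c)) μ := by
    obtain ⟨M, hM⟩ := hb
    simpa [exp_sub] using (integrable_exp_of_abs_le hm hM (μ := μ)).div_const (exp c)
  have hsplit : ∫ σ, exp (F σ) ∂μ = exp c * ∫ σ, exp (F σ - c) ∂μ := by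
    rw [← integral_const_mul]
    simp [← exp_add]
  have hpos := integral_exp_pos hcentered
  rw [hsplit, log_mul (exp_ne_zero c) hpos.ne', log_exp, add_le_add_iff_left]
  simpa using log_le_log hpos (hμ F hm hb hloc)

end Concentration

section SpatialSums

variable {S : Type*} {d : ℕ}

lemma IsBoundedFn.comp_shift {f : Config S d → ℝ} (hf : IsBoundedFn f) (k : Fin d → ℤ) :
    IsBoundedFn fun σ => f (shift k σ) :=
  let ⟨M, hM⟩ := hf
  ⟨M, fun σ => hM (shift k σ)⟩

def shiftSum (Λ : Finset (Fin d → ℤ)) (f : Config S d → ℝ) (σ : Config S d) : ℝ :=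
  ∑ k ∈ Λ, f (shift k σ)

lemma IsBoundedFn.shiftSum {f : Config S d → ℝ} (hf : IsBoundedFn f) (Λ : Finset (Fin d → ℤ)) :
    IsBoundedFn (_root_.shiftSum Λ f) := by
  obtain ⟨M, hM⟩ := hf
  refine ⟨Λ.card * M, fun σ => ?_⟩
  calc |_root_.shiftSum Λ f σ| ≤ ∑ k ∈ Λ, |f (shift k σ)| := Finset.abs_sum_le_sum_abs _ _
    _ ≤ Λ.card * M := by simpa using Finset.sum_le_sum fun k _ => hM (shift k σ)

lemma DependsOn.shiftSum_cube {f : Config S d → ℝ} {r : ℕ} (hf : DependsOn f (cube d r))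
    (n : ℕ) : DependsOn (shiftSum (cube d n) f) (cube d (n + r)) := fun _ _ hση =>
  Finset.sum_congr rfl fun _ hk => hf fun _ hm => hση _ (sub_mem_cube_add hk hm)

lemma tsum_osc_shiftSum_sq_le (f : Config S d → ℝ) (Λ : Finset (Fin d → ℤ)) :
    ∑' i, osc (shiftSum Λ f) i ^ 2 ≤ Λ.card * (∑' i, osc f i) ^ 2 :=
  calc ∑' i, osc (shiftSum Λ f) i ^ 2 ≤ ∑' i, (∑ k ∈ Λ, osc f (i + k)) ^ 2 :=
        ENNReal.tsum_le_tsum fun i => by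
          gcongr
          exact (osc_sum_le Λ _ i).trans (Finset.sum_le_sum fun k _ => osc_comp_shift_le f k i)
    _ ≤ Λ.card * (∑' i, osc f i) ^ 2 := tsum_sum_add_sq_le (osc f) Λ

variable [MeasurableSpace S]

lemma Measurable.shiftSum {f : Config S d → ℝ} (hf : Measurable f) (Λ : Finset (Fin d → ℤ)) :
    Measurable (_root_.shiftSum Λ f) :=
  Finset.measurable_sum _ fun k _ => hf.comp (measurable_shift k)

lemma TransInv.integral_shiftSum {μ : Measure (Config S d)} [IsFiniteMeasure μ]
    (hμ : TransInv μ) {f : Config S d → ℝ} (hm : Measurable f) (hb : IsBoundedFn f)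
    (Λ : Finset (Fin d → ℤ)) : ∫ σ, shiftSum Λ f σ ∂μ = Λ.card * ∫ σ, f σ ∂μ := by
  unfold shiftSum
  rw [integral_finsetSum _ fun k _ =>
    (hb.comp_shift k).integrable (hm.comp (measurable_shift k)) μ]
  simp [hμ.integral_comp_shift hm]

end SpatialSums

section EntropyBound

variable {S : Type*} {d : ℕ} [MeasurableSpace S]

theorem ofReal_card_mul_le_relEntΛ_cube {μ μ' : Measure (Config S d)} [IsProbabilityMeasure μ]
    [IsProbabilityMeasure μ'] {C : ℝ} (hC : 0 ≤ C) (hGCB : GCB C μ) (hμ : TransInv μ)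
    (hμ' : TransInv μ') {f : Config S d → ℝ} (hm : Measurable f) (hb : IsBoundedFn f) {r : ℕ}
    (hdep : DependsOn f (cube d r)) (hfin : ∑' i, osc f i ≠ ⊤) {β : ℝ} (hβ : 0 ≤ β) (n : ℕ) :
    ENNReal.ofReal ((cube d n).card * (β * (∫ σ, f σ ∂μ' - ∫ σ, f σ ∂μ)
      - C / 2 * β ^ 2 * (∑' i, osc f i).toReal ^ 2)) ≤ relEntΛ (cube d (n + r)) μ' μ := by
  set N : ℝ := ((cube d n).card : ℝ)
  set F : Config S d → ℝ := fun σ => β * shiftSum (cube d n) f σ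
  have hFm : Measurable F := (hm.shiftSum _).const_mul β
  have hFb : IsBoundedFn F := (hb.shiftSum _).const_mul β
  have hFdep : DependsOn F (cube d (n + r)) := fun σ η hση => by
    simp only [F, hdep.shiftSum_cube n hση]
  have hFint : ∀ κ : Measure (Config S d), [IsProbabilityMeasure κ] → TransInv κ →
      ∫ σ, F σ ∂κ = β * N * ∫ σ, f σ ∂κ := fun κ _ hκ => by
    rw [integral_const_mul, hκ.integral_shiftSum hm hb, mul_assoc]
  have hosc : (∑' i, osc F i ^ 2).toReal ≤ β ^ 2 * (N * (∑' i, osc f i).toReal ^ 2) := by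
    rw [toReal_tsum_osc_const_mul_sq _ hβ]
    refine mul_le_mul_of_nonneg_left ?_ (sq_nonneg β)
    simpa using ENNReal.toReal_mono (by finiteness) (tsum_osc_shiftSum_sq_le f (cube d n))
  have hlog := hGCB.log_integral_exp_le hFm hFb ⟨_, hFdep⟩
  refine (ENNReal.ofReal_le_ofReal ?_).trans
    (ofReal_integral_sub_log_integral_exp_le_relEntΛ μ' μ hFm hFb hFdep)
  rw [hFint μ hμ] at hlog
  rw [hFint μ' hμ']
  nlinarith [mul_le_mul_of_nonneg_left hosc (by positivity : 0 ≤ C / 2)]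

end EntropyBound

lemma ciSup_mul_sub_sq_mul (C u ρ : ℝ) (hC : 0 < C) (hu : 0 ≤ u) (hρ : 0 < ρ) :
    (⨆ β : {β : ℝ // 0 ≤ β}, ((β : ℝ) * u - C / 2 * (β : ℝ) ^ 2 * ρ)) = u ^ 2 / (2 * C * ρ) := by
  have hle : ∀ β : {β : ℝ // 0 ≤ β}, (β : ℝ) * u - C / 2 * β ^ 2 * ρ ≤ u ^ 2 / (2 * C * ρ) :=
    fun β => by
      rw [le_div_iff₀ (by positivity)]
      nlinarith [sq_nonneg (C * ρ * β - u)]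
  refine le_antisymm (ciSup_le hle) ((le_of_eq ?_).trans
    (le_ciSup ⟨_, Set.forall_mem_range.mpr hle⟩ ⟨u / (C * ρ), by positivity⟩))
  field_simp
  ring

theorem entropy_density_lower_bound_from_gcb {S : Type*} {d : ℕ} [MeasurableSpace S]
    (μ μ' : Measure (Config S d)) [IsProbabilityMeasure μ] [IsProbabilityMeasure μ']
    (C : ℝ) (hC : 0 < C) (hGCB : GCB C μ) (hμ : TransInv μ) (hμ' : TransInv μ')
    (f : Config S d → ℝ) (hm : Measurable f) (hb : IsBoundedFn f)
    (r : ℕ) (hdep : ∀ σ η : Config S d, (∀ i ∈ cube d r, σ i = η i) → f σ = f η)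
    (u ρ : ℝ) (hu : 0 < u) (hfu : u < (∫ x, f x ∂μ') - ∫ x, f x ∂μ)
    (hfin : (∑' i, osc f i) ≠ ⊤)
    (hρ : ((∑' i, osc f i).toReal) ^ 2 = ρ) (hρpos : 0 < ρ) :
    (∀ n : ℕ, ENNReal.ofReal (u ^ 2 / (2 * C * ρ)) ≤
        relEntΛ (cube d (n + r)) μ' μ / (cube d n).card) ∧
    (⨆ β : {β : ℝ // 0 ≤ β}, ((β : ℝ) * u - C / 2 * (β : ℝ) ^ 2 * ρ)) = u ^ 2 / (2 * C * ρ) ∧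
    0 < u ^ 2 / (2 * C * ρ) := by
  refine ⟨fun n => ?_, ciSup_mul_sub_sq_mul C u ρ hC hu.le hρpos, by positivity⟩
  have hβu : u / (C * ρ) * u - C / 2 * (u / (C * ρ)) ^ 2 * ρ = u ^ 2 / (2 * C * ρ) := by
    field_simp
    ring
  have hbound := ofReal_card_mul_le_relEntΛ_cube hC.le hGCB hμ hμ' hm hb hdep hfin
    (β := u / (C * ρ)) (by positivity) n
  rw [hρ] at hbound
  have hcard : ((cube d n).card : ℝ≥0∞) ≠ 0 :=
    Nat.cast_ne_zero.mpr (Finset.card_ne_zero.mpr ⟨0, zero_mem_cube n⟩)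
  rw [ENNReal.le_div_iff_mul_le (.inl hcard) (.inl (by simp)), mul_comm,
    ← ENNReal.ofReal_natCast, ← ENNReal.ofReal_mul (by positivity)]
  refine (ENNReal.ofReal_le_ofReal ?_).trans hbound
  rw [← hβu]
  gcongr
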